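/- arXiv:1904.08523 — 2 statements merged into one kernel-verified Lean document; each statement's English description precedes it below -/
import Mathlib

section
/- Let h and (h_y)_{y∈Y} (Y a countable index set) be independent exponential random variables with mean 1, and let (a_y)_{y∈Y} be nonnegative reals with ∑_y a_y < ∞. For t > 0, P(h > t · ∑_y h_y a_y) = ∏_y 1/(1 + t a_y). -/
/-!
Since `h` is a unit exponential independent of the interference `S = ∑ h_y a_y ≥ 0`, conditioning
on `S` gives `P(h > t S) = E[exp (-t S)]`, the Laplace transform of `S`. The series converges
almost surely because `E S = ∑ a_y < ∞`; by independence the Laplace transform of each finite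
partial sum factorises into `∏ E[exp (-t a_y h_y)] = ∏ 1 / (1 + t a_y)`, and dominated
convergence (the integrands are bounded by `1`) passes to the whole series.
-/

open MeasureTheory ProbabilityTheory Real Set Filter Topology
open scoped ENNReal

namespace ProbabilityTheory

section Exponential

variable {r s : ℝ}

lemma lintegral_exp_mul_expMeasure (hr : 0 < r) (hs : s < r) :
    ∫⁻ x, ENNReal.ofReal (exp (s * x)) ∂expMeasure r = ENNReal.ofReal (r / (r - s)) := by
  have hrs : 0 < r - s := sub_pos.2 hs
  -- `exp (s x)` tilts the density of rate `r` into a multiple of the density of rate `r - s`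
  have tilt : ∀ x, exponentialPDF r x * ENNReal.ofReal (exp (s * x))
      = ENNReal.ofReal (r / (r - s)) * exponentialPDF (r - s) x := by
    intro x
    rw [exponentialPDF_eq, exponentialPDF_eq]
    split_ifs
    · rw [← ENNReal.ofReal_mul (by positivity), ← ENNReal.ofReal_mul (by positivity)]
      congr 1
      field_simp
      rw [← exp_add]
      ring_nf
    · simp
  have hm : Measurable (exponentialPDF r) := (measurable_exponentialPDFReal r).ennreal_ofReal
  rw [show expMeasure r = volume.withDensity (exponentialPDF r) from rfl,
    lintegral_withDensity_eq_lintegral_mul _ hm (by fun_prop)]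
  simp_rw [Pi.mul_apply, tilt]
  rw [lintegral_const_mul' _ _ ENNReal.ofReal_ne_top, lintegral_exponentialPDF_eq_one hrs, mul_one]

lemma integrable_exp_mul_expMeasure (hr : 0 < r) (hs : s < r) :
    Integrable (fun x => exp (s * x)) (expMeasure r) := by
  refine ⟨by fun_prop, (hasFiniteIntegral_iff_ofReal ?_).2 ?_⟩
  · exact Eventually.of_forall fun x => (exp_pos _).le
  · rw [lintegral_exp_mul_expMeasure hr hs]
    exact ENNReal.ofReal_lt_top

lemma mgf_id_expMeasure (hr : 0 < r) (hs : s < r) : mgf id (expMeasure r) s = r / (r - s) := by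
  rw [mgf, integral_eq_lintegral_of_nonneg_ae (Eventually.of_forall fun x => (exp_pos _).le)
      (by fun_prop)]
  simp only [id]
  rw [lintegral_exp_mul_expMeasure hr hs,
    ENNReal.toReal_ofReal (div_nonneg hr.le (sub_pos.2 hs).le)]

lemma integrable_id_expMeasure (hr : 0 < r) : Integrable id (expMeasure r) := by
  refine integrable_of_mem_interior_integrableExpSet (mem_interior_iff_mem_nhds.2 ?_)
  exact mem_of_superset (Iio_mem_nhds hr) fun s hs => integrable_exp_mul_expMeasure hr hs

lemma ae_nonneg_expMeasure : ∀ᵐ x ∂expMeasure r, 0 ≤ x := by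
  simp only [ae_iff, not_le]
  rw [Iio_def, show expMeasure r = volume.withDensity (exponentialPDF r) from rfl,
    withDensity_apply _ measurableSet_Iio]
  exact lintegral_exponentialPDF_of_nonpos le_rfl

lemma expMeasure_Ioi (hr : 0 < r) {c : ℝ} (hc : 0 ≤ c) :
    expMeasure r (Ioi c) = ENNReal.ofReal (exp (-(r * c))) := by
  have := isProbabilityMeasure_expMeasure hr
  rw [← compl_Iic, prob_compl_eq_one_sub measurableSet_Iic, ← ofReal_cdf, cdf_expMeasure_eq hr,
    if_pos hc, ← ENNReal.ofReal_one, ← ENNReal.ofReal_sub _ (sub_nonneg.2 ?_), sub_sub_cancel]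
  exact exp_le_one_iff.2 (neg_nonpos.2 (mul_nonneg hr.le hc))

end Exponential

variable {Ω ι : Type*} {mΩ : MeasurableSpace Ω} {μ : Measure Ω}

lemma iIndepFun.indepFun_some_none {β : Type*} [MeasurableSpace β] {f : Option ι → Ω → β}
    (h : iIndepFun f μ) (hf : ∀ o, Measurable (f o)) :
    IndepFun (fun ω i => f (some i) ω) (f none) μ := by
  let m : Option ι → MeasurableSpace Ω := fun o => MeasurableSpace.comap (f o) inferInstance
  have hdisj : Disjoint (range (some : ι → Option ι)) {none} := by simp [Set.disjoint_left]
  have hsup := indep_iSup_of_disjoint (m := m) (fun o => (hf o).comap_le)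
    ((iIndepFun_iff_iIndep _ _ _).1 h) hdisj
  rw [IndepFun_iff_Indep]
  refine indep_of_indep_of_le_right (indep_of_indep_of_le_left hsup ?_) ?_
  · have hcoord : ∀ i, Measurable[⨆ o ∈ range some, m o] (f (some i)) := fun i =>
      Measurable.of_comap_le (le_iSup₂ (f := fun o (_ : o ∈ range some) => m o) (some i) ⟨i, rfl⟩)
    exact measurable_iff_comap_le.1 (@measurable_pi_iff _ _ _ (⨆ o ∈ range some, m o) _ |>.2 hcoord)
  · exact le_iSup₂ (f := fun o (_ : o ∈ ({none} : Set (Option ι))) => m o) none rfl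

lemma iIndepFun.indepFun_some_none₀ [Countable ι] {β : Type*} [MeasurableSpace β]
    {f : Option ι → Ω → β} (h : iIndepFun f μ) (hf : ∀ o, AEMeasurable (f o) μ) :
    IndepFun (fun ω i => f (some i) ω) (f none) μ := by
  have hmk := (h.congr fun o => (hf o).ae_eq_mk).indepFun_some_none fun o => (hf o).measurable_mk
  refine hmk.congr ?_ (hf none).ae_eq_mk.symm
  filter_upwards [ae_all_iff.2 fun i => (hf (some i)).ae_eq_mk] with ω hω
  exact funext fun i => (hω i).symm

section Laplace

variable {r : ℝ}

lemma measureReal_lt_of_indepFun_expMeasure [IsFiniteMeasure μ] {X E : Ω → ℝ} (hr : 0 < r)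
    (hX : AEMeasurable X μ) (hE : AEMeasurable E μ) (hXE : IndepFun X E μ)
    (hE_law : μ.map E = expMeasure r) (hX0 : 0 ≤ᵐ[μ] X) :
    μ.real {ω | X ω < E ω} = mgf X μ (-r) := by
  have := isProbabilityMeasure_expMeasure hr
  have hset : MeasurableSet {p : ℝ × ℝ | p.1 < p.2} :=
    measurableSet_lt measurable_fst measurable_snd
  have hjoint : μ {ω | X ω < E ω} = ∫⁻ x, expMeasure r (Ioi x) ∂μ.map X := by
    rw [show {ω | X ω < E ω} = (fun ω => (X ω, E ω)) ⁻¹' {p | p.1 < p.2} from rfl,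
      ← Measure.map_apply_of_aemeasurable (hX.prodMk hE) hset,
      (indepFun_iff_map_prod_eq_prod_map_map hX hE).1 hXE, hE_law, Measure.prod_apply hset]
    rfl
  have htail : ∀ᵐ x ∂μ.map X, expMeasure r (Ioi x) = ENNReal.ofReal (exp (-r * x)) := by
    filter_upwards [(ae_map_iff hX measurableSet_Ici).2 hX0] with x hx
    rw [expMeasure_Ioi hr hx, neg_mul]
  rw [measureReal_def, hjoint, lintegral_congr_ae htail, lintegral_map' (by fun_prop) hX, mgf,
    integral_eq_lintegral_of_nonneg_ae (Eventually.of_forall fun ω => (exp_pos _).le)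
      (by fun_prop)]

lemma mgf_mul_const_of_map_eq_expMeasure {Z : Ω → ℝ} (hr : 0 < r) (hZ : AEMeasurable Z μ)
    (hZ_law : μ.map Z = expMeasure r) {c s : ℝ} (hcs : c * s < r) :
    mgf (fun ω => Z ω * c) μ s = r / (r - c * s) := by
  simp_rw [mul_comm _ c]
  rw [mgf_const_mul, ← mgf_id_map hZ, hZ_law, mgf_id_expMeasure hr hcs]

lemma hasProd_mgf_tsum [Countable ι] [IsProbabilityMeasure μ] {X : ι → Ω → ℝ}
    (hind : iIndepFun X μ) (hX : ∀ i, AEMeasurable (X i) μ) (hX0 : ∀ i, 0 ≤ᵐ[μ] X i)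
    (hsum : ∀ᵐ ω ∂μ, Summable fun i => X i ω) {s : ℝ} (hs : s ≤ 0) :
    HasProd (fun i => mgf (X i) μ s) (mgf (fun ω => ∑' i, X i ω) μ s) := by
  rw [HasProd]
  simp_rw [← hind.mgf_sum₀ hX]
  refine tendsto_integral_filter_of_dominated_convergence (fun _ => 1)
    (Eventually.of_forall fun _ => by fun_prop) ?_ (integrable_const 1) ?_
  · filter_upwards with F
    filter_upwards [ae_all_iff.2 hX0] with ω hω
    rw [norm_of_nonneg (exp_pos _).le, exp_le_one_iff, Finset.sum_apply]
    exact mul_nonpos_of_nonpos_of_nonneg hs (Finset.sum_nonneg fun i _ => hω i)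
  · filter_upwards [hsum] with ω hω
    simp only [Finset.sum_apply]
    exact ((continuous_const.mul continuous_id).rexp.tendsto _).comp hω.hasSum

lemma ae_summable_mul_of_map_eq [Countable ι] {X : ι → Ω → ℝ} {ν : Measure ℝ}
    (hX : ∀ i, AEMeasurable (X i) μ) (hX_law : ∀ i, μ.map (X i) = ν) (hν : Integrable id ν)
    {c : ι → ℝ} (hc : Summable c) :
    ∀ᵐ ω ∂μ, Summable fun i => X i ω * c i := by
  have hnorm : ∀ i, eLpNorm (fun ω => X i ω * c i) 1 μ = ‖c i‖ₑ * eLpNorm id 1 ν := by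
    intro i
    rw [show (fun ω => X i ω * c i) = c i • X i from funext fun ω => mul_comm _ _,
      eLpNorm_const_smul, ← hX_law i, eLpNorm_map_measure (by fun_prop) (hX i)]
    rfl
  have hfin : ∑' i, eLpNorm (fun ω => X i ω * c i) 1 μ ≠ ∞ := by
    simp_rw [hnorm, ENNReal.tsum_mul_right]
    exact ENNReal.mul_ne_top (tsum_enorm_ne_top_iff_summable_norm.2 hc.norm)
      (memLp_one_iff_integrable.2 hν).eLpNorm_ne_top
  filter_upwards [summable_norm_of_tsum_eLpNorm_ne_top le_rfl
    (fun i => ((hX i).mul_const (c i)).aestronglyMeasurable) hfin] with ω hω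
  exact hω.of_norm

end Laplace

end ProbabilityTheory

/-- Conditional success probability under Rayleigh fading: for independent unit-rate
exponentials h and (h_y), P(h > t ∑ h_y a_y) = ∏ 1/(1 + t a_y). -/
theorem rayleigh_success_probability
    {Ω : Type*} {mΩ : MeasurableSpace Ω} (μ : Measure Ω) [IsProbabilityMeasure μ]
    {Y : Type*} [Countable Y]
    (h : Ω → ℝ) (hy : Y → Ω → ℝ) (a : Y → ℝ)
    (ha : ∀ y, 0 ≤ a y) (hsum : Summable a)
    (hind : iIndepFun (m := fun _ : Option Y => Real.measurableSpace)
      (fun o => o.elim h hy) μ)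
    (hexp : Measure.map h μ = expMeasure 1)
    (hexpy : ∀ y, Measure.map (hy y) μ = expMeasure 1)
    (t : ℝ) (ht : 0 < t) :
    (μ {ω | h ω > t * ∑' y, hy y ω * a y}).toReal = ∏' y, 1 / (1 + t * a y) := by
  have hν : expMeasure 1 ≠ 0 := (isProbabilityMeasure_expMeasure one_pos).ne_zero
  have hh : AEMeasurable h μ := .of_map_ne_zero (hexp ▸ hν)
  have hhy (y : Y) : AEMeasurable (hy y) μ := .of_map_ne_zero (hexpy y ▸ hν)
  set X : Y → Ω → ℝ := fun y ω => hy y ω * a y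
  have hX (y : Y) : AEMeasurable (X y) μ := (hhy y).mul_const _
  have hX0 (y : Y) : 0 ≤ᵐ[μ] X y := by
    filter_upwards [ae_of_ae_map (hhy y) (hexpy y ▸ ae_nonneg_expMeasure)] with ω hω
    exact mul_nonneg hω (ha y)
  have hXind : iIndepFun X μ :=
    (hind.precomp (Option.some_injective Y)).comp (fun y x => x * a y) (fun y => by fun_prop)
  have hSh : IndepFun (fun ω => t * ∑' y, X y ω) h μ :=
    (hind.indepFun_some_none₀ fun o => o.casesOn hh hhy).comp
      (φ := fun v : Y → ℝ => t * ∑' y, v y * a y) (ψ := id)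
      (measurable_const.mul (Measurable.tsum fun y => by fun_prop)) measurable_id
  have hprod := hasProd_mgf_tsum hXind hX hX0
    (ae_summable_mul_of_map_eq hhy hexpy (integrable_id_expMeasure one_pos) hsum)
    (neg_nonpos.2 ht.le)
  have hS0 : 0 ≤ᵐ[μ] fun ω => t * ∑' y, X y ω := by
    filter_upwards [ae_all_iff.2 hX0] with ω hω using mul_nonneg ht.le (tsum_nonneg hω)
  change μ.real {ω | t * ∑' y, X y ω < h ω} = _
  rw [measureReal_lt_of_indepFun_expMeasure one_pos ((AEMeasurable.tsum hX).const_mul t) hh hSh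
    hexp hS0, mgf_const_mul, mul_neg_one, hprod.tprod_eq.symm]
  refine tprod_congr fun y => ?_
  rw [mgf_mul_const_of_map_eq_expMeasure one_pos (hhy y) (hexpy y) (by nlinarith [ha y])]
  ring
end

section
/- Let (a_n)_{n≥1} be positive reals with I := ∑_{n≥1} a_n < ∞ and I > 0. For ε ∈ (0,1), let t(ε) > 0 be the unique solution of ∏_{n≥1} 1/(1 + t a_n) = 1 − ε. Then t(ε) ~ ε/I as ε → 0⁺, i.e., lim_{ε→0⁺} t(ε)·I/ε = 1. -/
/-!
With `x n = t * a n` and `S = ∑ x n = t * I`, the defining equation reads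
`∑ log (1 + x n) = -log (1 - ε)`. Since `x / (1 + S) ≤ x / (1 + x) ≤ log (1 + x) ≤ x` for
`0 ≤ x ≤ S`, the left side lies between `S / (1 + S)` and `S`, while `-log (1 - ε)` lies between
`ε` and `ε / (1 - ε)`. Hence `ε ≤ S ≤ ε / (1 - 2ε)`, which squeezes `S / ε` to `1`.
-/

open Filter Topology Real

namespace Real

lemma div_one_add_le_log_one_add {x : ℝ} (hx : 0 ≤ x) : x / (1 + x) ≤ log (1 + x) := by
  have h := one_sub_inv_le_log_of_pos (by positivity : 0 < 1 + x)
  rwa [← one_div, one_sub_div (by positivity), add_sub_cancel_left] at h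

lemma log_one_add_le_self {x : ℝ} (hx : -1 < x) : log (1 + x) ≤ x := by
  linarith [log_le_sub_one_of_pos (by linarith : 0 < 1 + x)]

lemma le_neg_log_one_sub {ε : ℝ} (hε : ε < 1) : ε ≤ -log (1 - ε) := by
  linarith [log_le_sub_one_of_pos (by linarith : 0 < 1 - ε)]

lemma neg_log_one_sub_le {ε : ℝ} (hε : ε < 1) : -log (1 - ε) ≤ ε / (1 - ε) := by
  have h := one_sub_inv_le_log_of_pos (by linarith : 0 < 1 - ε)
  have h' : 1 - (1 - ε)⁻¹ = -(ε / (1 - ε)) := by field_simp [(by linarith : 1 - ε ≠ 0)]; ring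
  linarith

end Real

section

variable {ι : Type*} {x : ι → ℝ}

lemma tprod_one_div_one_add_eq_exp_neg_tsum_log (hx : ∀ i, 0 ≤ x i) (hs : Summable x) :
    ∏' i, 1 / (1 + x i) = exp (-∑' i, log (1 + x i)) := by
  have hpos : ∀ i, 0 < 1 / (1 + x i) := fun i => by have := hx i; positivity
  have hlog : (fun i => log (1 / (1 + x i))) = fun i => -log (1 + x i) := by
    funext i; rw [one_div, log_inv]
  have hsum : Summable fun i => log (1 / (1 + x i)) :=
    hlog ▸ (summable_log_one_add_of_summable hs).neg
  rw [← rexp_tsum_eq_tprod hpos hsum, hlog, tsum_neg]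

lemma tsum_log_one_add_le_tsum (hx : ∀ i, 0 ≤ x i) (hs : Summable x) :
    ∑' i, log (1 + x i) ≤ ∑' i, x i :=
  (summable_log_one_add_of_summable hs).tsum_le_tsum
    (fun i => log_one_add_le_self (by linarith [hx i])) hs

lemma tsum_div_one_add_tsum_le_tsum_log_one_add (hx : ∀ i, 0 ≤ x i) (hs : Summable x) :
    (∑' i, x i) / (1 + ∑' i, x i) ≤ ∑' i, log (1 + x i) := by
  have hterm : ∀ i, x i / (1 + ∑' j, x j) ≤ log (1 + x i) := fun i =>
    calc x i / (1 + ∑' j, x j) ≤ x i / (1 + x i) :=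
          div_le_div_of_nonneg_left (hx i) (by linarith [hx i])
            (by linarith [hs.le_tsum i fun j _ => hx j])
      _ ≤ log (1 + x i) := div_one_add_le_log_one_add (hx i)
  rw [← tsum_div_const]
  exact (hs.div_const _).tsum_le_tsum hterm (summable_log_one_add_of_summable hs)

lemma le_tsum_and_one_sub_two_mul_tsum_le_of_tprod_one_div_one_add_eq (hx : ∀ i, 0 ≤ x i)
    (hs : Summable x) {ε : ℝ} (hε : ε < 1) (h : ∏' i, 1 / (1 + x i) = 1 - ε) :
    ε ≤ ∑' i, x i ∧ (1 - 2 * ε) * ∑' i, x i ≤ ε := by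
  have hlog : ∑' i, log (1 + x i) = -log (1 - ε) := by
    rw [← h, tprod_one_div_one_add_eq_exp_neg_tsum_log hx hs, log_exp, neg_neg]
  have hupper := tsum_log_one_add_le_tsum hx hs
  have hlower := tsum_div_one_add_tsum_le_tsum_log_one_add hx hs
  rw [hlog] at hupper hlower
  refine ⟨(le_neg_log_one_sub hε).trans hupper, ?_⟩
  have hS : 0 ≤ ∑' i, x i := tsum_nonneg hx
  have key := hlower.trans (neg_log_one_sub_le hε)
  rw [div_le_div_iff₀ (by linarith) (by linarith)] at key
  linarith

end

theorem ultrareliable_asymptotics_general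
    (a : ℕ → ℝ) (ha : ∀ n, 0 < a n) (hsum : Summable a)
    (I : ℝ) (hI : I = ∑' n, a n)
    (t : ℝ → ℝ)
    (ht_pos : ∀ ε ∈ Set.Ioo (0 : ℝ) 1, 0 < t ε)
    (ht_eq : ∀ ε ∈ Set.Ioo (0 : ℝ) 1, ∏' n, 1 / (1 + t ε * a n) = 1 - ε) :
    Tendsto (fun ε => t ε * I / ε) (nhdsWithin 0 (Set.Ioi 0)) (nhds 1) := by
  have hbounds : ∀ ε ∈ Set.Ioo (0 : ℝ) (1 / 2),
      1 ≤ t ε * I / ε ∧ t ε * I / ε ≤ 1 / (1 - 2 * ε) := by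
    rintro ε ⟨hε0, hε⟩
    have hε1 : ε ∈ Set.Ioo (0 : ℝ) 1 := ⟨hε0, by linarith⟩
    have hx : ∀ n, 0 ≤ t ε * a n := fun n => (mul_pos (ht_pos ε hε1) (ha n)).le
    obtain ⟨hlow, hup⟩ := le_tsum_and_one_sub_two_mul_tsum_le_of_tprod_one_div_one_add_eq hx
      (hsum.mul_left _) hε1.2 (ht_eq ε hε1)
    rw [tsum_mul_left, ← hI] at hlow hup
    rw [le_div_iff₀ hε0, div_le_div_iff₀ hε0 (by linarith)]
    constructor <;> linarith
  have hlim : Tendsto (fun ε : ℝ => 1 / (1 - 2 * ε)) (𝓝[>] 0) (𝓝 1) := by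
    have : ContinuousAt (fun ε : ℝ => 1 / (1 - 2 * ε)) 0 := by
      fun_prop (disch := norm_num)
    simpa using this.tendsto.mono_left nhdsWithin_le_nhds
  have hnear : Set.Ioo (0 : ℝ) (1 / 2) ∈ 𝓝[>] 0 := Ioo_mem_nhdsGT (by norm_num)
  refine tendsto_of_tendsto_of_tendsto_of_le_of_le' tendsto_const_nhds hlim ?_ ?_ <;>
    filter_upwards [hnear] with ε hε
  exacts [(hbounds ε hε).1, (hbounds ε hε).2]

/-- Ultrareliable regime: the SIR threshold t(ε) satisfies t(ε) ~ ε/I as ε → 0⁺. -/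
theorem ultrareliable_asymptotics
    (a : ℕ → ℝ) (ha : ∀ n, 0 < a n) (hsum : Summable a)
    (I : ℝ) (hI : I = ∑' n, a n) (hIpos : 0 < I)
    (t : ℝ → ℝ)
    (ht_pos : ∀ ε ∈ Set.Ioo (0 : ℝ) 1, 0 < t ε)
    (ht_eq : ∀ ε ∈ Set.Ioo (0 : ℝ) 1, ∏' n, 1 / (1 + t ε * a n) = 1 - ε) :
    Tendsto (fun ε => t ε * I / ε) (nhdsWithin 0 (Set.Ioi 0)) (nhds 1) :=
  ultrareliable_asymptotics_general a ha hsum I hI t ht_pos ht_eq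
end
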